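/- Let A be an additive weakly exact category with an additive super structure ε, and let (A, d_A) and (B, d_B) be differential objects compatible with the super structure. Then the map d : Hom(A,B) → Hom(A,B) given by d(f) = f∘d_A − d_B∘ε(f) satisfies d∘d = 0. Moreover, if (A,d_A) and (B,d_B) are admissible, then, with Z(A,B) = ker(d) and 𝔹(A,B) = Im(d), every f ∈ Z(A,B) induces a morphism H(A) → H(B) on cohomology, and this induced morphism is zero whenever f ∈ 𝔹(A,B), so there is a natural group homomorphism Z(A,B)/𝔹(A,B) → Hom(H(A), H(B)). -/

import Mathlib

open CategoryTheory CategoryTheory.Limits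

universe v u

section Defs

variable {C : Type u} [Category.{v} C] [HasZeroMorphisms C]

/-- `i : K ⟶ A` is a kernel of `p : A ⟶ B`. -/
def IsKernelOf {K A B : C} (i : K ⟶ A) (p : A ⟶ B) : Prop :=
  i ≫ p = 0 ∧ ∀ ⦃W : C⦄ (g : W ⟶ A), g ≫ p = 0 → ∃! h : W ⟶ K, h ≫ i = g

/-- `q : B ⟶ Q` is a cokernel of `i : A ⟶ B`. -/
def IsCokernelOf {A B Q : C} (q : B ⟶ Q) (i : A ⟶ B) : Prop :=
  i ≫ q = 0 ∧ ∀ ⦃W : C⦄ (g : B ⟶ W), i ≫ g = 0 → ∃! h : Q ⟶ W, q ≫ h = g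

variable (D : MorphismProperty C)

/-- `A ⟶ B ⟶ Q` is a short exact sequence for the class of deflations `D`:
`p` is a deflation and `i` is a kernel of `p`. -/
def IsShortExact {A B Q : C} (i : A ⟶ B) (p : B ⟶ Q) : Prop :=
  D p ∧ IsKernelOf i p

/-- An inflation is a kernel of some deflation. -/
def IsInflation {A B : C} (i : A ⟶ B) : Prop :=
  ∃ (Q : C) (p : B ⟶ Q), D p ∧ IsKernelOf i p

/-- The axioms for a weakly exact category: `D` is the class of deflations.
Axiom (0): isomorphisms and morphisms to a zero object are deflations;
Axiom (1): a deflation has a kernel and is a cokernel of its kernel;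
Axiom (2): deflations are closed under composition;
Axiom (3): if `g ∘ f` and `f` are deflations then so is `g`;
Axiom (4): the 3×3 lemma. -/
structure IsWeaklyExact : Prop where
  defl_of_isIso : ∀ ⦃X Y : C⦄ (f : X ⟶ Y), IsIso f → D f
  defl_to_zero : ∀ ⦃X Y : C⦄ (f : X ⟶ Y), IsZero Y → D f
  defl_kernel : ∀ ⦃X Y : C⦄ (p : X ⟶ Y), D p →
    ∃ (K : C) (i : K ⟶ X), IsKernelOf i p ∧ IsCokernelOf p i
  defl_comp : ∀ ⦃X Y Z : C⦄ (f : X ⟶ Y) (g : Y ⟶ Z), D f → D g → D (f ≫ g)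
  defl_cancel : ∀ ⦃X Y Z : C⦄ (f : X ⟶ Y) (g : Y ⟶ Z), D (f ≫ g) → D f → D g
  three_by_three : ∀ ⦃A₁ A₂ A₃ B₁ B₂ B₃ C₁ C₂ C₃ : C⦄
    (a₁ : A₁ ⟶ A₂) (a₂ : A₂ ⟶ A₃) (b₁ : B₁ ⟶ B₂) (b₂ : B₂ ⟶ B₃)
    (c₁ : C₁ ⟶ C₂) (c₂ : C₂ ⟶ C₃)
    (f₁ : A₁ ⟶ B₁) (f₂ : A₂ ⟶ B₂) (f₃ : A₃ ⟶ B₃)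
    (g₁ : B₁ ⟶ C₁) (g₂ : B₂ ⟶ C₂) (g₃ : B₃ ⟶ C₃),
    a₁ ≫ f₂ = f₁ ≫ b₁ → a₂ ≫ f₃ = f₂ ≫ b₂ →
    b₁ ≫ g₂ = g₁ ≫ c₁ → b₂ ≫ g₃ = g₂ ≫ c₂ →
    IsShortExact D f₁ g₁ → IsShortExact D f₂ g₂ → IsShortExact D f₃ g₃ →
    IsShortExact D b₁ b₂ → IsShortExact D c₁ c₂ →
    IsShortExact D a₁ a₂

end Defs

section Additive

variable {C : Type u} [Category.{v} C] [Preadditive C]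

/-- A super structure on a weakly exact category: a functor `ε` that is the
identity on objects, is an involution, is additive, and preserves short exact
sequences. -/
structure SuperStructure (D : MorphismProperty C) where
  map : ∀ ⦃X Y : C⦄, (X ⟶ Y) → (X ⟶ Y)
  map_id : ∀ X : C, map (𝟙 X) = 𝟙 X
  map_comp : ∀ ⦃X Y Z : C⦄ (f : X ⟶ Y) (g : Y ⟶ Z), map (f ≫ g) = map f ≫ map g
  map_invol : ∀ ⦃X Y : C⦄ (f : X ⟶ Y), map (map f) = f
  map_add : ∀ ⦃X Y : C⦄ (f g : X ⟶ Y), map (f + g) = map f + map g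
  map_shortExact : ∀ ⦃A B Q : C⦄ (i : A ⟶ B) (p : B ⟶ Q),
    IsShortExact D i p → IsShortExact D (map i) (map p)

variable {D : MorphismProperty C}

/-- The differential `f ↦ f ∘ d_A − d_B ∘ ε(f)` on `Hom(A, B)`, for
differential objects `(A, d_A)` and `(B, d_B)` compatible with the super
structure `ε`. -/
def homDiff (ε : SuperStructure D) {A B : C} (dA : A ⟶ A) (dB : B ⟶ B) :
    (A ⟶ B) →+ (A ⟶ B) :=
  AddMonoidHom.mk' (fun f => dA ≫ f - ε.map f ≫ dB) (by
    intro f g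
    simp only [ε.map_add, Preadditive.comp_add, Preadditive.add_comp]
    abel)

/-- The cocycles `Z(A,B) = ker d ⊆ Hom(A,B)`. -/
def cocycles (ε : SuperStructure D) {A B : C} (dA : A ⟶ A) (dB : B ⟶ B) :
    AddSubgroup (A ⟶ B) where
  carrier := {f | homDiff ε dA dB f = 0}
  add_mem' := by
    intro a b ha hb
    simp only [Set.mem_setOf_eq, map_add] at *
    rw [ha, hb, add_zero]
  zero_mem' := by simp only [Set.mem_setOf_eq, map_zero]
  neg_mem' := by
    intro a ha
    simp only [Set.mem_setOf_eq, map_neg] at *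
    rw [ha, neg_zero]

/-- The coboundaries `𝔹(A,B) = Im d ⊆ Hom(A,B)`. -/
def coboundaries (ε : SuperStructure D) {A B : C} (dA : A ⟶ A) (dB : B ⟶ B) :
    AddSubgroup (A ⟶ B) :=
  (homDiff ε dA dB).range

/-- The homotopy classes `Z(A,B)/𝔹(A,B)`. -/
abbrev homotopyClasses (ε : SuperStructure D) {A B : C} (dA : A ⟶ A) (dB : B ⟶ B) :=
  cocycles ε dA dB ⧸ ((coboundaries ε dA dB).addSubgroupOf (cocycles ε dA dB))

end Additive

/-!
Composition is written diagrammatically. A cocycle `f` satisfies `d_A ≫ f = ε f ≫ d_B`, and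
applying `ε` gives `d_A ≫ ε f = f ≫ d_B`. The first relation lets `f` descend to the cokernels
`c : A ⟶ Co` of the inflations, and the second shows that the descended map is compatible with
`t : Co ⟶ I`, so it restricts to the kernels `H = ker t`. For a coboundary `f = d_A ≫ g - ε g ≫ d_B`
the descended map is `t_A ≫ m_A ≫ g ≫ c_B`, which vanishes on `ker t_A`. As `c` is epi and the
inclusion `H ⟶ Co` is mono, the induced map is unique; hence it is additive and factors through
`Z(A,B)/𝔹(A,B)`.
-/

section KernelsCokernels

variable {C : Type u} [Category.{v} C] [HasZeroMorphisms C]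

theorem IsCokernelOf.epi {A B Q : C} {q : B ⟶ Q} {i : A ⟶ B} (h : IsCokernelOf q i) :
    Epi q := by
  refine ⟨fun u v huv => ?_⟩
  obtain ⟨_, _, huniq⟩ := h.2 (q ≫ u) (by rw [← Category.assoc, h.1, zero_comp])
  exact (huniq u rfl).trans (huniq v huv.symm).symm

theorem IsKernelOf.mono {K A B : C} {i : K ⟶ A} {p : A ⟶ B} (h : IsKernelOf i p) :
    Mono i := by
  refine ⟨fun u v huv => ?_⟩
  obtain ⟨_, _, huniq⟩ := h.2 (u ≫ i) (by rw [Category.assoc, h.1, comp_zero])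
  exact (huniq u rfl).trans (huniq v huv.symm).symm

theorem IsInflation.mono {D : MorphismProperty C} {A B : C} {i : A ⟶ B}
    (h : IsInflation D i) : Mono i :=
  let ⟨_, _, _, hker⟩ := h
  hker.mono

theorem IsWeaklyExact.epi_of_deflation {D : MorphismProperty C} (hD : IsWeaklyExact D)
    {X Y : C} {p : X ⟶ Y} (hp : D p) : Epi p :=
  let ⟨_, _, _, hcok⟩ := hD.defl_kernel p hp
  hcok.epi

end KernelsCokernels

section SuperStructure

variable {C : Type u} [Category.{v} C] [Preadditive C] {D : MorphismProperty C}

theorem SuperStructure.map_sub (ε : SuperStructure D) {X Y : C} (f g : X ⟶ Y) :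
    ε.map (f - g) = ε.map f - ε.map g :=
  (AddMonoidHom.mk' (fun h => ε.map h) fun h h' => ε.map_add h h').map_sub f g

variable (ε : SuperStructure D) {A B : C} {dA : A ⟶ A} {dB : B ⟶ B}

theorem homDiff_apply (f : A ⟶ B) : homDiff ε dA dB f = dA ≫ f - ε.map f ≫ dB :=
  rfl

theorem homDiff_homDiff (hdA : dA ≫ dA = 0) (hdB : dB ≫ dB = 0)
    (hεA : ε.map dA = -dA) (hεB : ε.map dB = -dB) (f : A ⟶ B) :
    homDiff ε dA dB (homDiff ε dA dB f) = 0 := by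
  have hA : dA ≫ dA ≫ f = 0 := by rw [← Category.assoc, hdA, zero_comp]
  simp only [homDiff_apply, ε.map_sub, ε.map_comp, ε.map_invol, hεA, hεB, Preadditive.comp_sub,
    Preadditive.sub_comp, Preadditive.neg_comp, Preadditive.comp_neg, Category.assoc, hA, hdB,
    comp_zero]
  abel

theorem mem_cocycles_iff {f : A ⟶ B} : f ∈ cocycles ε dA dB ↔ dA ≫ f = ε.map f ≫ dB :=
  sub_eq_zero

theorem comp_map_eq_of_mem_cocycles (hεA : ε.map dA = -dA) (hεB : ε.map dB = -dB)
    {f : A ⟶ B} (hf : f ∈ cocycles ε dA dB) : dA ≫ ε.map f = f ≫ dB := by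
  have h := congrArg (fun x : A ⟶ B => ε.map x) ((mem_cocycles_iff ε).1 hf)
  rwa [ε.map_comp, ε.map_comp, ε.map_invol, hεA, hεB, Preadditive.neg_comp,
    Preadditive.comp_neg, neg_inj] at h

end SuperStructure

/-- A factorization `d = e ≫ m` together with `H = ker (t : coker m ⟶ I)`, the cohomology of
`(A, d)`. -/
structure CohomologyData {C : Type u} [Category.{v} C] [HasZeroMorphisms C] {A : C}
    (d : A ⟶ A) where
  {I Co H : C}
  e : A ⟶ I
  m : I ⟶ A
  fac : e ≫ m = d
  c : A ⟶ Co
  isCokernel : IsCokernelOf c m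
  t : Co ⟶ I
  c_t : c ≫ t = e
  k : H ⟶ Co
  isKernel : IsKernelOf k t

namespace CohomologyData

variable {C : Type u} [Category.{v} C] [Preadditive C] {A B : C} {dA : A ⟶ A} {dB : B ⟶ B}
  (P : CohomologyData dA) (Q : CohomologyData dB)

theorem d_comp_c : dA ≫ P.c = 0 :=
  calc dA ≫ P.c = P.e ≫ P.m ≫ P.c := by rw [← Category.assoc, P.fac]
    _ = 0 := by rw [P.isCokernel.1, comp_zero]

def IsInduced (f : A ⟶ B) (Hf : P.H ⟶ Q.H) : Prop :=
  ∃ fbar : P.Co ⟶ Q.Co, P.c ≫ fbar = f ≫ Q.c ∧ Hf ≫ Q.k = P.k ≫ fbar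

variable {P Q}

theorem IsInduced.unique {f : A ⟶ B} {Hf Hf' : P.H ⟶ Q.H} (h : P.IsInduced Q f Hf)
    (h' : P.IsInduced Q f Hf') : Hf = Hf' := by
  obtain ⟨fbar, hc, hk⟩ := h
  obtain ⟨fbar', hc', hk'⟩ := h'
  have := P.isCokernel.epi
  have := Q.isKernel.mono
  have hbar : fbar = fbar' := (cancel_epi P.c).1 (hc.trans hc'.symm)
  exact (cancel_mono Q.k).1 (by rw [hk, hk', hbar])

theorem IsInduced.add {f g : A ⟶ B} {Hf Hg : P.H ⟶ Q.H} (hf : P.IsInduced Q f Hf)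
    (hg : P.IsInduced Q g Hg) : P.IsInduced Q (f + g) (Hf + Hg) := by
  obtain ⟨fbar, hfc, hfk⟩ := hf
  obtain ⟨gbar, hgc, hgk⟩ := hg
  exact ⟨fbar + gbar, by simp only [Preadditive.comp_add, Preadditive.add_comp, hfc, hgc],
    by simp only [Preadditive.comp_add, Preadditive.add_comp, hfk, hgk]⟩

variable (P Q)

theorem exists_cokernel_map [Epi P.e] {f g : A ⟶ B} (hfg : dA ≫ f = g ≫ dB) :
    ∃ fbar : P.Co ⟶ Q.Co, P.c ≫ fbar = f ≫ Q.c := by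
  have hm : P.m ≫ f ≫ Q.c = 0 := by
    rw [← cancel_epi P.e, comp_zero, ← Category.assoc, P.fac, ← Category.assoc, hfg,
      Category.assoc, Q.d_comp_c, comp_zero]
  obtain ⟨fbar, hfbar, -⟩ := P.isCokernel.2 (f ≫ Q.c) hm
  exact ⟨fbar, hfbar⟩

theorem cokernel_map_comp_t_comp_m {f g : A ⟶ B} (hgf : dA ≫ g = f ≫ dB)
    {fbar : P.Co ⟶ Q.Co} (hfbar : P.c ≫ fbar = f ≫ Q.c) :
    fbar ≫ Q.t ≫ Q.m = P.t ≫ P.m ≫ g := by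
  have := P.isCokernel.epi
  rw [← cancel_epi P.c]
  calc P.c ≫ fbar ≫ Q.t ≫ Q.m = f ≫ (Q.c ≫ Q.t) ≫ Q.m := by
        rw [← Category.assoc, hfbar]; simp only [Category.assoc]
    _ = dA ≫ g := by rw [Q.c_t, Q.fac, hgf]
    _ = P.c ≫ P.t ≫ P.m ≫ g := by rw [← Category.assoc, P.c_t, ← Category.assoc, P.fac]

theorem exists_isInduced [Epi P.e] [Mono Q.m] {f g : A ⟶ B} (hfg : dA ≫ f = g ≫ dB)
    (hgf : dA ≫ g = f ≫ dB) : ∃ Hf : P.H ⟶ Q.H, P.IsInduced Q f Hf := by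
  obtain ⟨fbar, hfbar⟩ := P.exists_cokernel_map Q hfg
  have hk : (P.k ≫ fbar) ≫ Q.t = 0 := by
    rw [← cancel_mono Q.m, zero_comp, Category.assoc, Category.assoc,
      P.cokernel_map_comp_t_comp_m Q hgf hfbar, ← Category.assoc, P.isKernel.1, zero_comp]
  obtain ⟨Hf, hHf, -⟩ := Q.isKernel.2 (P.k ≫ fbar) hk
  exact ⟨Hf, fbar, hfbar, hHf⟩

variable {P Q}

theorem IsInduced.eq_zero_of_eq_sub {f g h : A ⟶ B} (hf : f = dA ≫ g - h ≫ dB)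
    {Hf : P.H ⟶ Q.H} (hHf : P.IsInduced Q f Hf) : Hf = 0 := by
  obtain ⟨fbar, hc, hk⟩ := hHf
  have := P.isCokernel.epi
  have := Q.isKernel.mono
  have hfbar : fbar = P.t ≫ P.m ≫ g ≫ Q.c := by
    rw [← cancel_epi P.c, hc, hf, Preadditive.sub_comp, Category.assoc h, Q.d_comp_c, comp_zero,
      sub_zero, ← Category.assoc P.c, P.c_t, ← Category.assoc P.e, P.fac, Category.assoc]
  rw [← cancel_mono Q.k, hk, hfbar, zero_comp, ← Category.assoc, P.isKernel.1, zero_comp]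

end CohomologyData

theorem exists_addMonoidHom_of_rel {G M : Type*} [AddGroup G] [AddGroup M] (R : G → M → Prop)
    (total : ∀ x, ∃ y, R x y) (unique : ∀ {x y y'}, R x y → R x y' → y = y')
    (add : ∀ {x x' y y'}, R x y → R x' y' → R (x + x') (y + y')) :
    ∃ φ : G →+ M, ∀ x, R x (φ x) := by
  choose φ hφ using total
  exact ⟨AddMonoidHom.mk' φ fun x x' => unique (hφ (x + x')) (add (hφ x) (hφ x')), hφ⟩

theorem homotopy_invariance_of_cohomology_general {C : Type u} [Category.{v} C]
    [Preadditive C]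
    (D : MorphismProperty C) (hD : IsWeaklyExact D) (ε : SuperStructure D)
    {A B : C} (dA : A ⟶ A) (dB : B ⟶ B)
    (hdA : dA ≫ dA = 0) (hdB : dB ≫ dB = 0)
    (hεA : ε.map dA = -dA) (hεB : ε.map dB = -dB)
    {IA : C} (eA : A ⟶ IA) (mA : IA ⟶ A) (facA : eA ≫ mA = dA)
    (heA : D eA)
    {CoA : C} (cA : A ⟶ CoA) (hcA : IsCokernelOf cA mA)
    (tA : CoA ⟶ IA) (htA : cA ≫ tA = eA)
    {HA : C} (kA : HA ⟶ CoA) (hkA : IsKernelOf kA tA)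
    {IB : C} (eB : B ⟶ IB) (mB : IB ⟶ B) (facB : eB ≫ mB = dB)
    (hmB : IsInflation D mB)
    {CoB : C} (cB : B ⟶ CoB) (hcB : IsCokernelOf cB mB)
    (tB : CoB ⟶ IB) (htB : cB ≫ tB = eB)
    {HB : C} (kB : HB ⟶ CoB) (hkB : IsKernelOf kB tB) :
    (∀ f : A ⟶ B, homDiff ε dA dB (homDiff ε dA dB f) = 0) ∧
    (∀ f : A ⟶ B, f ∈ cocycles ε dA dB →
      ∃ (fbar : CoA ⟶ CoB) (Hf : HA ⟶ HB),
        cA ≫ fbar = f ≫ cB ∧ Hf ≫ kB = kA ≫ fbar) ∧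
    (∀ f : A ⟶ B, f ∈ coboundaries ε dA dB →
      ∀ (fbar : CoA ⟶ CoB) (Hf : HA ⟶ HB),
        cA ≫ fbar = f ≫ cB → Hf ≫ kB = kA ≫ fbar → Hf = 0) ∧
    (∃ Φ : homotopyClasses ε dA dB →+ (HA ⟶ HB),
      ∀ (f : A ⟶ B) (hf : f ∈ cocycles ε dA dB)
        (fbar : CoA ⟶ CoB) (Hf : HA ⟶ HB),
        cA ≫ fbar = f ≫ cB → Hf ≫ kB = kA ≫ fbar →
        Φ (QuotientAddGroup.mk ⟨f, hf⟩) = Hf) := by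
  let P : CohomologyData dA := ⟨eA, mA, facA, cA, hcA, tA, htA, kA, hkA⟩
  let Q : CohomologyData dB := ⟨eB, mB, facB, cB, hcB, tB, htB, kB, hkB⟩
  have : Epi P.e := hD.epi_of_deflation heA
  have : Mono Q.m := hmB.mono
  have induced_of_cocycle (f : A ⟶ B) (hf : f ∈ cocycles ε dA dB) :
      ∃ Hf : HA ⟶ HB, P.IsInduced Q f Hf :=
    P.exists_isInduced Q ((mem_cocycles_iff ε).1 hf) (comp_map_eq_of_mem_cocycles ε hεA hεB hf)
  have induced_of_coboundary (f : A ⟶ B) (hf : f ∈ coboundaries ε dA dB) (Hf : HA ⟶ HB)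
      (hHf : P.IsInduced Q f Hf) : Hf = 0 := by
    obtain ⟨g, rfl⟩ := hf
    exact hHf.eq_zero_of_eq_sub (homDiff_apply ε g)
  obtain ⟨φ, hφ⟩ := exists_addMonoidHom_of_rel (fun x : cocycles ε dA dB => P.IsInduced Q x)
    (fun x => induced_of_cocycle x x.2) CohomologyData.IsInduced.unique CohomologyData.IsInduced.add
  refine ⟨homDiff_homDiff ε hdA hdB hεA hεB, fun f hf => ?_,
    fun f hf fbar Hf hc hk => induced_of_coboundary f hf Hf ⟨fbar, hc, hk⟩,
    QuotientAddGroup.lift _ φ fun x hx => induced_of_coboundary x hx _ (hφ x),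
    fun f hf fbar Hf hc hk => (hφ ⟨f, hf⟩).unique ⟨fbar, hc, hk⟩⟩
  obtain ⟨Hf, fbar, hc, hk⟩ := induced_of_cocycle f hf
  exact ⟨fbar, Hf, hc, hk⟩

/-- **Lemma 7.3.**  Let `𝒜` be an additive weakly exact category with an
additive super structure `ε`, and `(A, d_A)`, `(B, d_B)` differential objects
compatible with the super structure.  Then `d(f) = f ∘ d_A − d_B ∘ ε(f)` is a
differential on `Hom(A,B)` (`d² = 0`).  If moreover `(A, d_A)` and `(B, d_B)`
are admissible (with the canonical data computing `H(A)` and `H(B)`), then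
every `f ∈ Z(A,B)` induces a morphism `H(A) ⟶ H(B)` (via the induced morphism
`f̄` on the cokernels), the induced morphism is zero when `f ∈ 𝔹(A,B)`, and
there is a group homomorphism `Z(A,B)/𝔹(A,B) →+ Hom(H(A), H(B))` sending the
class of `f` to the induced morphism. -/
theorem homotopy_invariance_of_cohomology {C : Type u} [Category.{v} C]
    [Preadditive C] [HasZeroObject C] [HasFiniteBiproducts C]
    (D : MorphismProperty C) (hD : IsWeaklyExact D) (ε : SuperStructure D)
    {A B : C} (dA : A ⟶ A) (dB : B ⟶ B)
    (hdA : dA ≫ dA = 0) (hdB : dB ≫ dB = 0)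
    (hεA : ε.map dA = -dA) (hεB : ε.map dB = -dB)
    {IA : C} (eA : A ⟶ IA) (mA : IA ⟶ A) (facA : eA ≫ mA = dA)
    (heA : D eA) (hmA : IsInflation D mA)
    {CoA : C} (cA : A ⟶ CoA) (hcA : IsCokernelOf cA mA)
    (tA : CoA ⟶ IA) (htA : cA ≫ tA = eA)
    {HA : C} (kA : HA ⟶ CoA) (hkA : IsKernelOf kA tA)
    {IB : C} (eB : B ⟶ IB) (mB : IB ⟶ B) (facB : eB ≫ mB = dB)
    (heB : D eB) (hmB : IsInflation D mB)
    {CoB : C} (cB : B ⟶ CoB) (hcB : IsCokernelOf cB mB)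
    (tB : CoB ⟶ IB) (htB : cB ≫ tB = eB)
    {HB : C} (kB : HB ⟶ CoB) (hkB : IsKernelOf kB tB) :
    (∀ f : A ⟶ B, homDiff ε dA dB (homDiff ε dA dB f) = 0) ∧
    (∀ f : A ⟶ B, f ∈ cocycles ε dA dB →
      ∃ (fbar : CoA ⟶ CoB) (Hf : HA ⟶ HB),
        cA ≫ fbar = f ≫ cB ∧ Hf ≫ kB = kA ≫ fbar) ∧
    (∀ f : A ⟶ B, f ∈ coboundaries ε dA dB →
      ∀ (fbar : CoA ⟶ CoB) (Hf : HA ⟶ HB),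
        cA ≫ fbar = f ≫ cB → Hf ≫ kB = kA ≫ fbar → Hf = 0) ∧
    (∃ Φ : homotopyClasses ε dA dB →+ (HA ⟶ HB),
      ∀ (f : A ⟶ B) (hf : f ∈ cocycles ε dA dB)
        (fbar : CoA ⟶ CoB) (Hf : HA ⟶ HB),
        cA ≫ fbar = f ≫ cB → Hf ≫ kB = kA ≫ fbar →
        Φ (QuotientAddGroup.mk ⟨f, hf⟩) = Hf) :=
  homotopy_invariance_of_cohomology_general D hD ε dA dB hdA hdB hεA hεB eA mA facA heA cA hcA tA
    htA kA hkA eB mB facB hmB cB hcB tB htB kB hkB
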